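/- arXiv:1306.0318 — 3 statements merged into one kernel-verified Lean document; each statement's English description precedes it below -/
import Mathlib

section
/- If Γ = {γ_{mn}} is a d-regular sequence, then the sum over all (m,n) ∈ ℤ² with (m,n) ≠ (0,0) of (1/|λ_{mn}|) · |d/λ_{mn} − 1/γ_{mn}| is finite. -/
open Complex MeasureTheory Filter

/-- The integer lattice point `λ_{mn} = m + i n`. -/
noncomputable def latticePt (p : ℤ × ℤ) : ℂ := (p.1 : ℂ) + (p.2 : ℂ) * Complex.I

/-- A sequence `Γ = {γ_{mn}}` is `d`-regular if there are `c > 0` and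
`φ : [1,∞) → ℝ` with `φ(t)/t` non-increasing, `∫₁^∞ φ(t)/t² dt < ∞`, such that
`|λ_{mn} - d γ_{mn}| ≤ φ(|λ_{mn}|)` and `|γ_{mn} - γ_{m'n'}| ≥ c |λ_{mn} - λ_{m'n'}|`. -/
def DRegular (d : ℝ) (γ : ℤ × ℤ → ℂ) : Prop :=
  ∃ c : ℝ, 0 < c ∧ ∃ φ : ℝ → ℝ,
    (∀ s t : ℝ, 1 ≤ s → s ≤ t → φ t / t ≤ φ s / s) ∧
    MeasureTheory.IntegrableOn (fun t : ℝ => φ t / t ^ 2) (Set.Ici 1) ∧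
    (∀ p : ℤ × ℤ, ‖latticePt p - (d : ℂ) * γ p‖ ≤ φ ‖latticePt p‖) ∧
    (∀ p q : ℤ × ℤ, c * ‖latticePt p - latticePt q‖ ≤ ‖γ p - γ q‖)

/-! Write `ψ(t) = φ(t)/t`. Since `ψ` is non-increasing and `ψ(t)/t` is integrable on `[1, ∞)`,
`ψ` is nonnegative and eventually at most `1/2`, and the integral test gives `∑ φ(n)/n² < ∞`.
Once `ψ(|λ|) ≤ 1/2` we have `|λ - dγ| ≤ |λ|/2`, hence `|d| |γ| ≥ |λ|/2`, and the summand at `λ` with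
`|λ| ≥ n` is at most `2|d| ψ(n)/n²`. The square shell `max(|m|, |n|) = n` holds `8n` lattice points,
so its contribution is at most `16|d| φ(n)/n²`. -/

open Set

theorem not_integrableOn_Ioi_of_mul_inv_le_abs {g : ℝ → ℝ} {s e : ℝ} (hs : 0 < s) (he : 0 < e)
    (h : ∀ t ∈ Ioi s, e * t⁻¹ ≤ |g t|) : ¬ IntegrableOn g (Ioi s) := by
  intro hg
  have hmul : IntegrableOn (fun t => e * t⁻¹) (Ioi s) := by
    refine hg.norm.mono' (by fun_prop) ?_
    filter_upwards [ae_restrict_mem measurableSet_Ioi] with t ht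
    rw [Real.norm_of_nonneg (by have := hs.trans ht; positivity)]
    exact h t ht
  have hinv := hmul.const_mul e⁻¹
  simp_rw [← mul_assoc, inv_mul_cancel₀ he.ne', one_mul] at hinv
  exact not_integrableOn_Ioi_inv hinv

theorem div_sq_eq_div_mul_inv (a t : ℝ) : a / t ^ 2 = a / t * t⁻¹ := by
  rw [sq, ← div_div, div_eq_mul_inv]

theorem div_nonneg_of_antitone_div_of_integrableOn {φ : ℝ → ℝ}
    (hmono : ∀ s t : ℝ, 1 ≤ s → s ≤ t → φ t / t ≤ φ s / s)
    (hint : IntegrableOn (fun t : ℝ => φ t / t ^ 2) (Ici 1)) {s : ℝ} (hs : 1 ≤ s) :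
    0 ≤ φ s / s := by
  by_contra! hneg
  refine not_integrableOn_Ioi_of_mul_inv_le_abs (e := -(φ s / s)) (by linarith) (by linarith) ?_
    (hint.mono_set fun t ht => hs.trans (le_of_lt ht))
  intro t ht
  have ht0 : 0 < t := by linarith [mem_Ioi.mp ht]
  calc -(φ s / s) * t⁻¹ ≤ -(φ t / t * t⁻¹) := by
        rw [neg_mul, neg_le_neg_iff]
        exact mul_le_mul_of_nonneg_right (hmono s t hs (le_of_lt ht)) (by positivity)
    _ ≤ |φ t / t ^ 2| := by rw [div_sq_eq_div_mul_inv]; exact neg_le_abs _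

theorem exists_div_le_of_integrableOn {φ : ℝ → ℝ}
    (hint : IntegrableOn (fun t : ℝ => φ t / t ^ 2) (Ici 1)) {ε : ℝ} (hε : 0 < ε) :
    ∃ T, 1 ≤ T ∧ φ T / T ≤ ε := by
  by_contra! h
  refine not_integrableOn_Ioi_of_mul_inv_le_abs (s := 1) one_pos hε ?_
    (hint.mono_set Ioi_subset_Ici_self)
  intro t ht
  have ht1 : 1 ≤ t := le_of_lt ht
  calc ε * t⁻¹ ≤ φ t / t * t⁻¹ :=
        mul_le_mul_of_nonneg_right (h t ht1).le (by positivity)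
    _ ≤ |φ t / t ^ 2| := by rw [div_sq_eq_div_mul_inv]; exact le_abs_self _

theorem summable_div_sq_of_antitone_div_of_integrableOn {φ : ℝ → ℝ}
    (hmono : ∀ s t : ℝ, 1 ≤ s → s ≤ t → φ t / t ≤ φ s / s)
    (hint : IntegrableOn (fun t : ℝ => φ t / t ^ 2) (Ici 1)) :
    Summable (fun n : ℕ => φ n / (n : ℝ) ^ 2) := by
  have hnonneg : ∀ s, 1 ≤ s → 0 ≤ φ s / s := fun s hs =>
    div_nonneg_of_antitone_div_of_integrableOn hmono hint hs
  have hanti : AntitoneOn (fun t : ℝ => φ t / t ^ 2) (Ici ((1 : ℕ) : ℝ)) := by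
    rw [Nat.cast_one]
    intro s hs t ht hst
    simp only [div_sq_eq_div_mul_inv]
    exact mul_le_mul (hmono s t hs hst) (inv_anti₀ (by linarith [mem_Ici.mp hs]) hst)
      (by have := mem_Ici.mp ht; positivity) (hnonneg s hs)
  refine hanti.summable_of_integrableOn_Ioi ?_ fun t ht => ?_
  · rw [Nat.cast_one]
    exact hint.mono_set Ioi_subset_Ici_self
  · rw [Nat.cast_one] at ht
    rw [div_sq_eq_div_mul_inv]
    have hψ := hnonneg t (le_of_lt ht)
    have ht0 : (0 : ℝ) < t := lt_trans one_pos (mem_Ioi.mp ht)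
    positivity

theorem norm_div_sub_one_div_le {𝕜 : Type*} [NormedField 𝕜] {z w d : 𝕜} {ε : ℝ} (hz : z ≠ 0)
    (h : ‖z - d * w‖ ≤ ε) (hε : ε ≤ ‖z‖ / 2) :
    ‖d / z - 1 / w‖ ≤ 2 * ‖d‖ * ε / ‖z‖ ^ 2 := by
  have hz0 : 0 < ‖z‖ := norm_pos_iff.mpr hz
  have hdw : ‖z‖ / 2 ≤ ‖d‖ * ‖w‖ := by
    have := norm_le_norm_add_norm_sub' z (d * w)
    rw [norm_mul] at this
    linarith
  have hw : w ≠ 0 := by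
    rintro rfl
    rw [norm_zero, mul_zero] at hdw
    linarith
  have hw0 : 0 < ‖w‖ := norm_pos_iff.mpr hw
  have hnorm : ‖d / z - 1 / w‖ = ‖z - d * w‖ / (‖z‖ * ‖w‖) := by
    rw [div_sub_div _ _ hz hw, norm_div, norm_mul, mul_one, ← norm_neg, neg_sub]
  rw [hnorm, div_le_div_iff₀ (by positivity) (by positivity)]
  have hε0 : 0 ≤ ε := (norm_nonneg _).trans h
  nlinarith [mul_le_mul_of_nonneg_right h (sq_nonneg ‖z‖),
    mul_le_mul_of_nonneg_left hdw (mul_nonneg hε0 hz0.le)]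

theorem natAbs_max_le_norm_latticePt (p : ℤ × ℤ) :
    ((max p.1.natAbs p.2.natAbs : ℕ) : ℝ) ≤ ‖latticePt p‖ := by
  have hre : (latticePt p).re = p.1 := by simp [latticePt]
  have him : (latticePt p).im = p.2 := by simp [latticePt]
  rw [Nat.cast_max, Nat.cast_natAbs, Nat.cast_natAbs, Int.cast_abs, Int.cast_abs, ← hre, ← him]
  exact max_le (abs_re_le_norm _) (abs_im_le_norm _)

theorem summable_of_le_on_box {f : ℤ × ℤ → ℝ} {g : ℕ → ℝ} (hf : 0 ≤ f)
    (hg : Summable fun n : ℕ => (n : ℝ) * g n)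
    (hfg : ∀ᶠ n in atTop, ∀ p ∈ Finset.box n, f p ≤ g n) : Summable f := by
  rw [summable_partition hf (s := fun n : ℕ => ((Finset.box n : Finset (ℤ × ℤ)) : Set (ℤ × ℤ)))
    fun p => by simpa only [Finset.mem_coe] using Int.existsUnique_mem_box p]
  refine ⟨fun n => (hasSum_fintype _).summable, ?_⟩
  refine (hg.mul_left 8).of_norm_bounded_eventually_nat ?_
  filter_upwards [hfg, eventually_gt_atTop 0] with n hbound hn
  rw [Finset.tsum_subtype' (Finset.box n) f,
    Real.norm_of_nonneg (Finset.sum_nonneg fun p _ => hf p)]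
  calc ∑ p ∈ Finset.box n, f p ≤ (Finset.box n).card • g n :=
        Finset.sum_le_card_nsmul _ _ _ hbound
    _ = 8 * (n * g n) := by rw [Int.card_box hn.ne', nsmul_eq_mul]; push_cast; ring

theorem one_div_norm_mul_norm_div_sub_one_div_le {𝕜 : Type*} [NormedField 𝕜] {φ : ℝ → ℝ}
    (hmono : ∀ s t : ℝ, 1 ≤ s → s ≤ t → φ t / t ≤ φ s / s) {T n : ℝ} (hT1 : 1 ≤ T)
    (hT : φ T / T ≤ 1 / 2) (hTn : T ≤ n) {z w d : 𝕜} (hn : n ≤ ‖z‖)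
    (h : ‖z - d * w‖ ≤ φ ‖z‖) :
    1 / ‖z‖ * ‖d / z - 1 / w‖ ≤ 2 * ‖d‖ * (φ n / n ^ 3) := by
  have hn1 : 1 ≤ n := hT1.trans hTn
  have ha0 : 0 < ‖z‖ := by linarith
  have hφa0 : 0 ≤ φ ‖z‖ := (norm_nonneg _).trans h
  have hφa : φ ‖z‖ ≤ ‖z‖ / 2 := by
    have := (hmono T ‖z‖ hT1 (hTn.trans hn)).trans hT
    rw [div_le_iff₀ ha0] at this
    linarith
  have hψ : φ ‖z‖ / ‖z‖ ≤ φ n / n := hmono n ‖z‖ hn1 hn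
  calc 1 / ‖z‖ * ‖d / z - 1 / w‖
      ≤ 1 / ‖z‖ * (2 * ‖d‖ * φ ‖z‖ / ‖z‖ ^ 2) := by
        gcongr
        exact norm_div_sub_one_div_le (norm_pos_iff.mp ha0) h hφa
    _ = 2 * ‖d‖ * (φ ‖z‖ / ‖z‖ / ‖z‖ ^ 2) := by ring
    _ ≤ 2 * ‖d‖ * (φ n / n / n ^ 2) := by
        have hψa : 0 ≤ φ ‖z‖ / ‖z‖ := by positivity
        gcongr
        linarith
    _ = 2 * ‖d‖ * (φ n / n ^ 3) := by ring

theorem dRegular_summable_general (d : ℝ) (γ : ℤ × ℤ → ℂ) (hΓ : DRegular d γ) :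
    Summable (fun p : {q : ℤ × ℤ // q ≠ (0, 0)} =>
      (1 / ‖latticePt p.1‖) *
        ‖(d : ℂ) / latticePt p.1 - 1 / γ p.1‖) := by
  obtain ⟨-, -, φ, hmono, hint, hclose, -⟩ := hΓ
  obtain ⟨T, hT1, hT⟩ := exists_div_le_of_integrableOn hint one_half_pos
  have hbox : ∀ᶠ n : ℕ in atTop, ∀ p ∈ Finset.box n,
      1 / ‖latticePt p‖ * ‖(d : ℂ) / latticePt p - 1 / γ p‖ ≤ 2 * |d| * (φ n / n ^ 3) := by
    filter_upwards [eventually_ge_atTop ⌈T⌉₊] with n hn p hp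
    have hpn : (n : ℝ) ≤ ‖latticePt p‖ := Int.mem_box.mp hp ▸ natAbs_max_le_norm_latticePt p
    simpa only [norm_real, Real.norm_eq_abs] using
      one_div_norm_mul_norm_div_sub_one_div_le hmono hT1 hT (Nat.ceil_le.mp hn) hpn (hclose p)
  have hmajorant : Summable fun n : ℕ => (n : ℝ) * (2 * |d| * (φ n / n ^ 3)) := by
    refine ((summable_div_sq_of_antitone_div_of_integrableOn hmono hint).mul_left (2 * |d|)).congr
      fun n => ?_
    rcases eq_or_ne (n : ℝ) 0 with hn | hn
    · simp [hn]
    · field_simp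
  exact (summable_of_le_on_box (fun p => by positivity) hmajorant hbox).subtype _

/-- Lemma 2.1(b): Σ'_{m,n} (1/|λ_{mn}|)·|d/λ_{mn} − 1/γ_{mn}| < ∞. -/
theorem dRegular_summable (d : ℝ) (hd : 0 < d) (γ : ℤ × ℤ → ℂ) (hΓ : DRegular d γ) :
    Summable (fun p : {q : ℤ × ℤ // q ≠ (0, 0)} =>
      (1 / ‖latticePt p.1‖) *
        ‖(d : ℂ) / latticePt p.1 - 1 / γ p.1‖) :=
  dRegular_summable_general d γ hΓ
end

section
/- Let φ : [1,∞) → ℝ be a positive function such that t ↦ φ(t)/t is non-increasing and ∫₁^∞ φ(t)/t² dt < ∞. Then φ(t) = o(t / ln t) as t → ∞, i.e. φ(t) · ln(t) / t → 0 as t → ∞. -/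
open Filter MeasureTheory Set

/-- Lemma 2.2: if `φ` is positive on `[1,∞)`, `φ(t)/t` is non-increasing and
`∫₁^∞ φ(t)/t² dt < ∞`, then `φ(t) = o(t/ln t)` as `t → ∞`. -/
theorem phi_littleO (φ : ℝ → ℝ)
    (hpos : ∀ t : ℝ, 1 ≤ t → 0 < φ t)
    (hmono : ∀ s t : ℝ, 1 ≤ s → s ≤ t → φ t / t ≤ φ s / s)
    (hint : MeasureTheory.IntegrableOn (fun t : ℝ => φ t / t ^ 2) (Set.Ici 1)) :
    Filter.Tendsto (fun t : ℝ => φ t * Real.log t / t) Filter.atTop (nhds 0) := by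
  set g : ℝ → ℝ := fun t => φ t / t ^ 2 with hg
  have hIoi : IntegrableOn g (Set.Ioi 1) := hint.mono_set Ioi_subset_Ici_self
  -- the tail integral tends to 0
  have htail : Tendsto (fun a : ℝ => ∫ x in Set.Ioi a, g x) atTop (nhds 0) := by
    have h1 : Tendsto (fun a : ℝ => ∫ x in (1:ℝ)..a, g x) atTop
        (nhds (∫ x in Set.Ioi 1, g x)) :=
      intervalIntegral_tendsto_integral_Ioi 1 hIoi tendsto_id
    have h2 := tendsto_const_nhds (α := ℝ) (x := ∫ x in Set.Ioi 1, g x)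
      (f := atTop) |>.sub h1
    rw [sub_self] at h2
    refine h2.congr' ?_
    filter_upwards [eventually_ge_atTop (1:ℝ)] with a ha
    rw [intervalIntegral.integral_of_le ha]
    have hsplit : Set.Ioc 1 a ∪ Set.Ioi a = Set.Ioi 1 := Set.Ioc_union_Ioi_eq_Ioi ha
    rw [← hsplit, setIntegral_union (Set.Ioc_disjoint_Ioi le_rfl) measurableSet_Ioi
        (hIoi.mono_set (by rw [← hsplit]; exact subset_union_left))
        (hIoi.mono_set (by rw [← hsplit]; exact subset_union_right))]
    ring
  have hsqrt : Tendsto Real.sqrt atTop atTop := by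
    apply tendsto_atTop_atTop_of_monotone (fun a b h => Real.sqrt_le_sqrt h)
    intro b
    exact ⟨(max b 0) ^ 2, by
      rw [Real.sqrt_sq (le_max_right _ _)]; exact le_max_left _ _⟩
  have hlim : Tendsto (fun t : ℝ => 2 * ∫ x in Set.Ioi (Real.sqrt t), g x)
      atTop (nhds 0) := by
    have := (htail.comp hsqrt).const_mul (2 : ℝ)
    simpa using this
  refine tendsto_of_tendsto_of_tendsto_of_le_of_le' tendsto_const_nhds hlim ?_ ?_
  · filter_upwards [eventually_ge_atTop (1:ℝ)] with t ht
    have ht0 : (0:ℝ) < t := lt_of_lt_of_le one_pos ht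
    have := hpos t ht
    have hl : 0 ≤ Real.log t := Real.log_nonneg ht
    positivity
  · filter_upwards [eventually_ge_atTop (1:ℝ)] with t ht
    have ht0 : (0:ℝ) < t := lt_of_lt_of_le one_pos ht
    set s0 := Real.sqrt t with hs0
    have hs01 : 1 ≤ s0 := Real.one_le_sqrt.mpr ht
    have hs0pos : (0:ℝ) < s0 := lt_of_lt_of_le one_pos hs01
    have hs0t : s0 ≤ t := by
      nlinarith [Real.sq_sqrt ht0.le, Real.sqrt_nonneg t]
    -- integrability on the interval
    have hIab : IntegrableOn g (Set.Ioc s0 t) := by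
      apply hint.mono_set
      intro x hx
      exact le_trans hs01 hx.1.le
    have I1 : IntervalIntegrable g volume s0 t :=
      (intervalIntegrable_iff_integrableOn_Ioc_of_le hs0t).mpr hIab
    have I2 : IntervalIntegrable (fun s : ℝ => (φ t / t) * (1 / s)) volume s0 t := by
      apply ContinuousOn.intervalIntegrable
      apply ContinuousOn.mul continuousOn_const
      apply ContinuousOn.div continuousOn_const continuousOn_id
      intro x hx
      rw [Set.uIcc_of_le hs0t] at hx
      exact ne_of_gt (lt_of_lt_of_le hs0pos hx.1)
    -- pointwise comparison
    have hcomp : ∀ s ∈ Set.Icc s0 t, (φ t / t) * (1 / s) ≤ g s := by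
      intro s hs
      have hs1 : 1 ≤ s := le_trans hs01 hs.1
      have hspos : (0:ℝ) < s := lt_of_lt_of_le one_pos hs1
      have hm : φ t / t ≤ φ s / s := hmono s t hs1 hs.2
      have : (φ t / t) * (1 / s) ≤ (φ s / s) * (1 / s) :=
        mul_le_mul_of_nonneg_right hm (by positivity)
      refine this.trans_eq ?_
      show _ = φ s / s ^ 2
      rw [div_mul_div_comm, mul_one, ← sq]
    have hmonoInt := intervalIntegral.integral_mono_on hs0t I2 I1 hcomp
    have hval : ∫ s in s0..t, (φ t / t) * (1 / s) = (φ t / t) * (Real.log t / 2) := by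
      rw [intervalIntegral.integral_const_mul, integral_one_div]
      · rw [hs0, Real.div_sqrt, Real.log_sqrt ht0.le]
      · rw [Set.uIcc_of_le hs0t]
        intro hx
        exact absurd hx.1 (not_le.mpr hs0pos)
    -- bound the interval integral by the tail integral
    have hbound : ∫ s in s0..t, g s ≤ ∫ x in Set.Ioi s0, g x := by
      rw [intervalIntegral.integral_of_le hs0t]
      apply setIntegral_mono_set (hIoi.mono_set ?_) ?_ ?_
      · intro x hx; exact lt_of_le_of_lt hs01 hx
      · filter_upwards [ae_restrict_mem measurableSet_Ioi] with x hx
        have hx1 : (1:ℝ) ≤ x := le_trans hs01 (le_of_lt hx)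
        have := hpos x hx1
        have hxpos : (0:ℝ) < x := lt_of_lt_of_le one_pos hx1
        rw [hg]
        positivity
      · exact HasSubset.Subset.eventuallyLE Set.Ioc_subset_Ioi_self
    rw [hval] at hmonoInt
    have hfin : φ t * Real.log t / t = 2 * ((φ t / t) * (Real.log t / 2)) := by ring
    rw [hfin]
    have := hmonoInt.trans hbound
    linarith
end

section
/- Let Λ = {m + in : m, n ∈ ℤ} be the integer lattice and let λ₁, λ₂ ∈ Λ be two distinct lattice points. Then Λ \ {λ₁, λ₂} is not a uniqueness set for the Bargmann–Fock space 𝓕: there exists an entire function F, not identically zero, with ∫_ℂ |F(z)|² e^{−π|z|²} dA(z) < ∞, that vanishes at every point of Λ \ {λ₁, λ₂}. -/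
/-!
Put `σ(z) = θ(z + (1 + i)/2, i) · exp(π i z + π z²/2)`. The zero set of `θ(·, τ)` is invariant
under `ℤ + τℤ` and contains `(1 + τ)/2`, so `σ` vanishes on `ℤ + iℤ`; and `|θ(z, i)| e^{-π (Im z)²}`
is continuous and doubly periodic, hence bounded, which gives `|σ(z)| ≤ C e^{π|z|²/2}`.
Dividing out two lattice zeros, `F(z) = σ(z) / ((z - λ₁)(z - λ₂))` is entire, vanishes on the rest
of the lattice, and `|F(z)|² e^{-π|z|²} = O(|z|⁻⁴)`, which is integrable on `ℂ ≅ ℝ²`.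
-/

open Complex MeasureTheory Function

open scoped Real

theorem Complex.bddAbove_range_of_periodic {G : ℂ → ℝ} (hG : Continuous G) (h₁ : Periodic G 1)
    (hI : Periodic G I) : BddAbove (Set.range G) := by
  have hK : IsCompact (Set.Icc (0 : ℝ) 1 ×ℂ Set.Icc 0 1) := isCompact_Icc.reProdIm isCompact_Icc
  refine (hK.image hG).bddAbove.mono ?_
  rintro _ ⟨z, rfl⟩
  refine ⟨z - ⌊z.re⌋ * 1 - ⌊z.im⌋ * I, ?_, by rw [hI.sub_int_mul_eq, h₁.sub_int_mul_eq]⟩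
  simp only [mem_reProdIm, sub_re, sub_im, mul_one, mul_re, mul_im, I_re, I_im, intCast_re,
    intCast_im, mul_zero, sub_zero, add_zero]
  exact ⟨⟨Int.fract_nonneg _, (Int.fract_lt_one _).le⟩, ⟨Int.fract_nonneg _, (Int.fract_lt_one _).le⟩⟩

theorem periodic_jacobiTheta₂_eq_zero (τ : ℂ) : Periodic (fun z ↦ jacobiTheta₂ z τ = 0) τ := by
  intro z
  simp [jacobiTheta₂_add_left', Complex.exp_ne_zero]

theorem jacobiTheta₂_half_period_eq_zero (τ : ℂ) : jacobiTheta₂ ((1 + τ) / 2) τ = 0 := by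
  -- quasi-periodicity from `-(1 + τ)/2`, together with evenness, gives `θ = -θ`
  have h := jacobiTheta₂_add_left' (-((1 + τ) / 2)) τ
  rw [show -((1 + τ) / 2) + τ = (1 + τ) / 2 - 1 by ring, jacobiTheta₂_neg_left,
    show τ + 2 * -((1 + τ) / 2) = -1 by ring, ← jacobiTheta₂_add_left, sub_add_cancel,
    show -↑π * I * -1 = π * I by ring, exp_pi_mul_I] at h
  linear_combination h / 2

theorem jacobiTheta₂_half_period_add_lattice_eq_zero (τ : ℂ) (m n : ℤ) :
    jacobiTheta₂ ((1 + τ) / 2 + m + n * τ) τ = 0 := by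
  have h₁ : Periodic (fun z ↦ jacobiTheta₂ z τ = 0) 1 := fun z ↦ by
    simp only [jacobiTheta₂_add_left]
  have h := ((periodic_jacobiTheta₂_eq_zero τ).int_mul n).add_period (h₁.int_mul m) ((1 + τ) / 2)
  simp only [mul_one] at h
  rw [show (1 + τ) / 2 + m + n * τ = (1 + τ) / 2 + (n * τ + m) by ring, h]
  exact jacobiTheta₂_half_period_eq_zero τ

theorem jacobiTheta₂_zero_ofReal_mul_I_ne_zero {t : ℝ} (ht : 0 < t) :
    jacobiTheta₂ 0 (t * I) ≠ 0 := by
  have hterm (n : ℤ) : jacobiTheta₂_term n 0 (t * I) = (Real.exp (-π * n ^ 2 * t) : ℂ) := by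
    rw [jacobiTheta₂_term, ofReal_exp]
    push_cast
    ring_nf
    rw [I_sq]
    ring_nf
  have hs : Summable fun n : ℤ ↦ Real.exp (-π * n ^ 2 * t) := by
    simpa [norm_jacobiTheta₂_term] using
      ((summable_jacobiTheta₂_term_iff 0 (t * I)).2 (by simpa using ht)).norm
  rw [jacobiTheta₂, funext hterm, ← ofReal_tsum, ofReal_ne_zero]
  exact (hs.tsum_pos (fun _ ↦ (Real.exp_pos _).le) 0 (Real.exp_pos _)).ne'

theorem differentiable_jacobiTheta₂_I : Differentiable ℂ (jacobiTheta₂ · I) :=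
  fun z ↦ differentiableAt_jacobiTheta₂_fst z (by simp)

theorem exists_norm_jacobiTheta₂_I_le :
    ∃ C, ∀ z, ‖jacobiTheta₂ z I‖ ≤ C * Real.exp (π * z.im ^ 2) := by
  set G : ℂ → ℝ := fun z ↦ ‖jacobiTheta₂ z I‖ * Real.exp (-π * z.im ^ 2)
  have hG : Continuous G := by
    have := differentiable_jacobiTheta₂_I.continuous
    fun_prop
  have h₁ : Periodic G 1 := fun z ↦ by simp [G, jacobiTheta₂_add_left]
  have hI : Periodic G I := fun z ↦ by
    have hre : (-π * I * (I + 2 * z)).re = π + 2 * π * z.im := by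
      simp only [neg_mul, neg_re, mul_re, ofReal_re, I_re, mul_zero, ofReal_im, I_im, mul_one,
        sub_self, add_re, re_ofNat, im_ofNat, zero_mul, sub_zero, zero_add, mul_im, add_zero,
        add_im, zero_sub, neg_neg]
      ring
    simp only [G, jacobiTheta₂_add_left', norm_mul, norm_exp, hre, add_im, I_im]
    rw [mul_right_comm, ← Real.exp_add, mul_comm]
    ring_nf
  obtain ⟨C, hC⟩ := bddAbove_range_of_periodic hG h₁ hI
  refine ⟨C, fun z ↦ ?_⟩
  calc ‖jacobiTheta₂ z I‖ = G z * Real.exp (π * z.im ^ 2) := by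
        simp [G, mul_assoc, ← Real.exp_add]
    _ ≤ C * Real.exp (π * z.im ^ 2) :=
        mul_le_mul_of_nonneg_right (hC ⟨z, rfl⟩) (Real.exp_pos _).le

/-- A constant multiple of the Weierstrass `σ`-function of the lattice `ℤ[i]`. -/
noncomputable def latticeSigma (z : ℂ) : ℂ :=
  jacobiTheta₂ (z + (1 + I) / 2) I * cexp (π * I * z + π / 2 * z ^ 2)

theorem differentiable_latticeSigma : Differentiable ℂ latticeSigma :=
  (differentiable_jacobiTheta₂_I.comp (differentiable_id.add_const _)).mul (by fun_prop)

theorem latticeSigma_intCast_add_intCast_mul_I (m n : ℤ) : latticeSigma (m + n * I) = 0 := by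
  rw [latticeSigma, show (m : ℂ) + n * I + (1 + I) / 2 = (1 + I) / 2 + m + n * I by ring,
    jacobiTheta₂_half_period_add_lattice_eq_zero, zero_mul]

theorem latticeSigma_neg_half_ne_zero : latticeSigma (-((1 + I) / 2)) ≠ 0 := by
  rw [latticeSigma, neg_add_cancel]
  refine mul_ne_zero ?_ (exp_ne_zero _)
  simpa using jacobiTheta₂_zero_ofReal_mul_I_ne_zero one_pos

theorem exists_norm_latticeSigma_le :
    ∃ C, ∀ z, ‖latticeSigma z‖ ≤ C * Real.exp (π / 2 * ‖z‖ ^ 2) := by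
  obtain ⟨C, hC⟩ := exists_norm_jacobiTheta₂_I_le
  refine ⟨C * Real.exp (π / 4), fun z ↦ ?_⟩
  have hre : (π * I * z + π / 2 * z ^ 2).re = π / 2 * (z.re ^ 2 - z.im ^ 2) - π * z.im := by
    simp only [sq, add_re, mul_re, ofReal_re, I_re, mul_zero, ofReal_im, I_im, mul_one, sub_self,
      zero_mul, mul_im, add_zero, zero_sub, div_ofNat_re, div_ofNat_im, zero_div, sub_zero]
    ring
  have him : (z + (1 + I) / 2).im = z.im + 1 / 2 := by simp
  calc ‖latticeSigma z‖
      = ‖jacobiTheta₂ (z + (1 + I) / 2) I‖ *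
          Real.exp (π / 2 * (z.re ^ 2 - z.im ^ 2) - π * z.im) := by
        rw [latticeSigma, norm_mul, norm_exp, hre]
    _ ≤ C * Real.exp (π * (z.im + 1 / 2) ^ 2) *
          Real.exp (π / 2 * (z.re ^ 2 - z.im ^ 2) - π * z.im) := by
        gcongr; exact him ▸ hC _
    _ = C * Real.exp (π / 4) * Real.exp (π / 2 * ‖z‖ ^ 2) := by
        rw [Complex.sq_norm, normSq_apply, mul_assoc, mul_assoc, ← Real.exp_add, ← Real.exp_add]
        ring_nf

theorem intCast_add_intCast_mul_I_ne_neg_half (m n : ℤ) : (m + n * I : ℂ) ≠ -((1 + I) / 2) := by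
  intro h
  have him := congrArg im h
  simp only [add_im, intCast_im, mul_im, intCast_re, I_im, I_re, mul_one, mul_zero, zero_add,
    neg_im, div_ofNat_im, one_im] at him
  have : 2 * n = -1 := by exact_mod_cast (by linarith : (2 * n : ℝ) = -1)
  omega

theorem dslope_dslope_eq_div {𝕜 : Type*} [NontriviallyNormedField 𝕜] {f : 𝕜 → 𝕜} {a b z : 𝕜}
    (hab : a ≠ b) (ha : f a = 0) (hb : f b = 0) (hza : z ≠ a) (hzb : z ≠ b) :
    dslope (dslope f a) b z = f z / ((z - a) * (z - b)) := by
  have hd {w : 𝕜} (hw : w ≠ a) : dslope f a w = f w / (w - a) := by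
    rw [dslope_of_ne _ hw, slope_def_field, ha, sub_zero]
  rw [dslope_of_ne _ hzb, slope_def_field, hd hab.symm, hb, zero_div, sub_zero, hd hza, div_div]

theorem Differentiable.dslope {E : Type*} [NormedAddCommGroup E] [NormedSpace ℂ E]
    [CompleteSpace E] {f : ℂ → E} (hf : Differentiable ℂ f) (a : ℂ) :
    Differentiable ℂ (dslope f a) :=
  differentiableOn_univ.1 <| (differentiableOn_dslope Filter.univ_mem).2 hf.differentiableOn

theorem integrable_sq_norm_dslope_dslope_mul_exp {f : ℂ → ℂ} (hf : Differentiable ℂ f) {C : ℝ}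
    (hC : ∀ z, ‖f z‖ ≤ C * Real.exp (π / 2 * ‖z‖ ^ 2)) {a b : ℂ} (hab : a ≠ b) (ha : f a = 0)
    (hb : f b = 0) :
    Integrable fun z ↦ ‖dslope (dslope f a) b z‖ ^ 2 * Real.exp (-π * ‖z‖ ^ 2) := by
  have hF : Continuous (dslope (dslope f a) b) := ((hf.dslope a).dslope b).continuous
  refine (Continuous.locallyIntegrable (by fun_prop)).integrable_of_isBigO_cocompact
    (g := fun z ↦ (1 + ‖z‖) ^ (-4 : ℝ)) ?_
    ((integrable_one_add_norm (by norm_num [finrank_real_complex])).integrableAtFilter _)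
  refine Asymptotics.IsBigO.of_bound (16 * C ^ 2) ?_
  filter_upwards [tendsto_norm_cocompact_atTop.eventually_ge_atTop (2 * (‖a‖ + ‖b‖) + 1)]
    with z hz
  have hfar {w : ℂ} (hw : ‖w‖ ≤ ‖a‖ + ‖b‖) : (1 + ‖z‖) / 2 ≤ ‖z - w‖ := by
    linarith [norm_sub_norm_le z w]
  have hza := hfar (le_add_of_nonneg_right (norm_nonneg b))
  have hzb := hfar (le_add_of_nonneg_left (norm_nonneg a))
  have hne {w : ℂ} (hw : (1 + ‖z‖) / 2 ≤ ‖z - w‖) : z ≠ w :=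
    sub_ne_zero.1 (norm_pos_iff.1 (lt_of_lt_of_le (by positivity) hw))
  have hweight : ‖f z‖ ^ 2 * Real.exp (-π * ‖z‖ ^ 2) ≤ C ^ 2 := by
    calc ‖f z‖ ^ 2 * Real.exp (-π * ‖z‖ ^ 2)
        ≤ (C * Real.exp (π / 2 * ‖z‖ ^ 2)) ^ 2 * Real.exp (-π * ‖z‖ ^ 2) := by
          gcongr; exact hC z
      _ = C ^ 2 := by
          rw [mul_pow, ← Real.exp_nat_mul, mul_assoc, ← Real.exp_add]
          ring_nf
          simp
  have hden : ((1 + ‖z‖) / 2) ^ 4 ≤ ‖(z - a) * (z - b)‖ ^ 2 := by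
    rw [norm_mul, mul_pow, show 4 = 2 + 2 from rfl, pow_add]
    gcongr
  rw [Real.norm_of_nonneg (by positivity), Real.norm_of_nonneg (by positivity),
    dslope_dslope_eq_div hab ha hb (hne hza) (hne hzb), norm_div, div_pow, div_mul_eq_mul_div,
    Real.rpow_neg (by positivity)]
  calc ‖f z‖ ^ 2 * Real.exp (-π * ‖z‖ ^ 2) / ‖(z - a) * (z - b)‖ ^ 2
      ≤ C ^ 2 / ((1 + ‖z‖) / 2) ^ 4 := div_le_div₀ (sq_nonneg C) hweight (by positivity) hden
    _ = 16 * C ^ 2 * ((1 + ‖z‖) ^ (4 : ℝ))⁻¹ := by norm_cast; field_simp; ring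

/-- Removing two distinct points from the integer lattice `ℤ + iℤ` yields a set which
is not a uniqueness set for the Bargmann–Fock space. -/
theorem lattice_minus_two_points_not_uniqueness (a₁ b₁ a₂ b₂ : ℤ)
    (hne : ((a₁ : ℂ) + (b₁ : ℂ) * Complex.I) ≠ ((a₂ : ℂ) + (b₂ : ℂ) * Complex.I)) :
    ∃ F : ℂ → ℂ, Differentiable ℂ F ∧
      MeasureTheory.Integrable
        (fun z : ℂ => ‖F z‖ ^ 2 * Real.exp (-Real.pi * ‖z‖ ^ 2)) ∧
      (∀ m n : ℤ,
        ((m : ℂ) + (n : ℂ) * Complex.I) ≠ ((a₁ : ℂ) + (b₁ : ℂ) * Complex.I) →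
        ((m : ℂ) + (n : ℂ) * Complex.I) ≠ ((a₂ : ℂ) + (b₂ : ℂ) * Complex.I) →
        F ((m : ℂ) + (n : ℂ) * Complex.I) = 0) ∧
      F ≠ 0 := by
  have hσ₁ := latticeSigma_intCast_add_intCast_mul_I a₁ b₁
  have hσ₂ := latticeSigma_intCast_add_intCast_mul_I a₂ b₂
  obtain ⟨C, hC⟩ := exists_norm_latticeSigma_le
  refine ⟨dslope (dslope latticeSigma _) _,
    (differentiable_latticeSigma.dslope _).dslope _,
    integrable_sq_norm_dslope_dslope_mul_exp differentiable_latticeSigma hC hne hσ₁ hσ₂,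
    fun m n h₁ h₂ ↦ ?_, fun hF ↦ ?_⟩
  · rw [dslope_dslope_eq_div hne hσ₁ hσ₂ h₁ h₂, latticeSigma_intCast_add_intCast_mul_I, zero_div]
  · have hc₁ := (intCast_add_intCast_mul_I_ne_neg_half a₁ b₁).symm
    have hc₂ := (intCast_add_intCast_mul_I_ne_neg_half a₂ b₂).symm
    refine div_ne_zero latticeSigma_neg_half_ne_zero
      (mul_ne_zero (sub_ne_zero.2 hc₁) (sub_ne_zero.2 hc₂)) ?_
    rw [← dslope_dslope_eq_div hne hσ₁ hσ₂ hc₁ hc₂, hF, Pi.zero_apply]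
end
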